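/- In a finite-horizon MDP, for any value function f = (f_1,...,f_H) with f_h : X × A → ℝ and any policy π', the value difference satisfies V_1^{π'}(x_1) - V_1^{π^f}(x_1) ≤ Σ_{h=1}^H E_{π^f}[(E_h f)(x_h,a_h)] - Σ_{h=1}^H E_{π'}[(E_h f)(x_h,a_h)], where π^f is the greedy policy of f and (E_h f)(x,a) = f_h(x,a) - (T_h f_{h+1})(x,a) is the Bellman residual. -/

import Mathlib

open Finset

noncomputable section

variable {X A : Type*}

/-- Value of a stochastic policy `π` computed with `fuel` remaining steps,
starting at time step `h` in state `x`, for mean rewards `r` and transition kernel `P`. -/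
def val [Fintype X] [Fintype A] (P : ℕ → X → A → X → ℝ) (r : ℕ → X → A → ℝ)
    (π : ℕ → X → A → ℝ) : ℕ → ℕ → X → ℝ
  | 0, _, _ => 0
  | k + 1, h, x => ∑ a, π h x a * (r h x a + ∑ x', P h x a x' * val P r π k (h + 1) x')

/-- State occupancy measure of policy `π` at step `h`, started at `x1` at step 0. -/
def occ [Fintype X] [Fintype A] [DecidableEq X] (P : ℕ → X → A → X → ℝ) (π : ℕ → X → A → ℝ)
    (x1 : X) : ℕ → X → ℝ
  | 0 => fun x => if x = x1 then 1 else 0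
  | h + 1 => fun x' => ∑ x, ∑ a, occ P π x1 h x * π h x a * P h x a x'

/-- Expectation `E_π[φ(x_h, a_h)]` over the trajectory distribution of `π`. -/
def Eexp [Fintype X] [Fintype A] [DecidableEq X] (P : ℕ → X → A → X → ℝ) (π : ℕ → X → A → ℝ)
    (x1 : X) (h : ℕ) (φ : X → A → ℝ) : ℝ :=
  ∑ x, ∑ a, occ P π x1 h x * π h x a * φ x a

/-- Bellman residual `(E_h f)(x,a) = f_h(x,a) - (T_h f_{h+1})(x,a)`. -/
def bellmanRes [Fintype X] [Fintype A] [Nonempty A] (P : ℕ → X → A → X → ℝ)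
    (r : ℕ → X → A → ℝ) (f : ℕ → X → A → ℝ) (h : ℕ) (x : X) (a : A) : ℝ :=
  f h x a -
    (r h x a + ∑ x', P h x a x' * (univ.sup' univ_nonempty fun a' => f (h + 1) x' a'))

/-- A deterministic policy `g`, viewed as a stochastic policy. -/
def dpol [DecidableEq A] (g : ℕ → X → A) : ℕ → X → A → ℝ :=
  fun h x a => if a = g h x then 1 else 0

/-!
Write `V_h x = max_a f_h(x, a)`. For every policy `π`, the expected Bellman residual at step `h`
is `E_π[f_h] - E_π[r_h] - E_π[V_{h+1}(x_{h+1})]`, so summing over `h` telescopes the `V` terms: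
`Σ_h E_π[E_h f] = V_0(x_1) - V^π + Σ_h (E_π[f_h(x_h, a_h)] - E_π[V_h(x_h)])`, using `V_H = 0`.
The last sum vanishes for the greedy policy and is nonpositive for any stochastic policy,
and subtracting the two identities gives the bound.
-/

section ValueDecomposition

section MaxVal

variable [Fintype A] [Nonempty A]

def maxVal (f : ℕ → X → A → ℝ) (h : ℕ) (x : X) : ℝ :=
  univ.sup' univ_nonempty fun a => f h x a

lemma le_maxVal (f : ℕ → X → A → ℝ) (h : ℕ) (x : X) (a : A) :
    f h x a ≤ maxVal f h x :=
  le_sup' (fun a => f h x a) (mem_univ a)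

lemma maxVal_eq_of_greedy {f : ℕ → X → A → ℝ} {h : ℕ} {x : X} {b : A}
    (hb : ∀ a, f h x a ≤ f h x b) : maxVal f h x = f h x b :=
  le_antisymm (sup'_le _ _ fun a _ => hb a) (le_maxVal f h x b)

end MaxVal

variable [Fintype X] [Fintype A] [DecidableEq X]

lemma occ_nonneg (P : ℕ → X → A → X → ℝ) (π : ℕ → X → A → ℝ) (x1 : X)
    (hP : ∀ h x a x', 0 ≤ P h x a x') (hπ : ∀ h x a, 0 ≤ π h x a) (h : ℕ) (x : X) :
    0 ≤ occ P π x1 h x := by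
  induction h generalizing x with
  | zero => simp only [occ]; split_ifs <;> norm_num
  | succ h ih =>
    exact sum_nonneg fun y _ => sum_nonneg fun a _ =>
      mul_nonneg (mul_nonneg (ih y) (hπ h y a)) (hP h y a x)

lemma sum_occ_zero_mul (P : ℕ → X → A → X → ℝ) (π : ℕ → X → A → ℝ) (x1 : X) (W : X → ℝ) :
    ∑ x, occ P π x1 0 x * W x = W x1 := by
  simp [occ]

lemma sum_occ_mul_expected_next (P : ℕ → X → A → X → ℝ) (π : ℕ → X → A → ℝ) (x1 : X) (h : ℕ)
    (W : X → ℝ) :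
    ∑ x, ∑ a, occ P π x1 h x * π h x a * ∑ x', P h x a x' * W x' =
      ∑ x', occ P π x1 (h + 1) x' * W x' := by
  simp only [occ, Finset.sum_mul, Finset.mul_sum]
  conv_rhs => rw [sum_comm]
  refine sum_congr rfl fun x _ => ?_
  conv_rhs => rw [sum_comm]
  exact sum_congr rfl fun a _ => sum_congr rfl fun x' _ => by ring

lemma sum_occ_mul_val (P : ℕ → X → A → X → ℝ) (r π : ℕ → X → A → ℝ) (x1 : X) (k h : ℕ) :
    ∑ x, occ P π x1 h x * val P r π k h x =
      ∑ j ∈ range k, Eexp P π x1 (h + j) (r (h + j)) := by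
  induction k generalizing h with
  | zero => simp [_root_.val]
  | succ k ih =>
    have hsplit : ∀ x, occ P π x1 h x *
        ∑ a, π h x a * (r h x a + ∑ x', P h x a x' * val P r π k (h + 1) x') =
        ∑ a, occ P π x1 h x * π h x a * r h x a +
          ∑ a, occ P π x1 h x * π h x a * ∑ x', P h x a x' * val P r π k (h + 1) x' := by
      intro x
      rw [mul_sum, ← sum_add_distrib]
      exact sum_congr rfl fun a _ => by ring
    simp only [_root_.val, hsplit, sum_add_distrib, sum_occ_mul_expected_next, ih, sum_range_succ',
      Nat.add_zero, add_assoc, add_comm 1]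
    exact add_comm _ _

lemma val_eq_sum_Eexp (P : ℕ → X → A → X → ℝ) (r π : ℕ → X → A → ℝ) (x1 : X) (H : ℕ) :
    val P r π H 0 x1 = ∑ h ∈ range H, Eexp P π x1 h (r h) := by
  simpa [sum_occ_zero_mul] using sum_occ_mul_val P r π x1 H 0

variable [Nonempty A]

lemma Eexp_bellmanRes (P : ℕ → X → A → X → ℝ) (r f π : ℕ → X → A → ℝ) (x1 : X) (h : ℕ) :
    Eexp P π x1 h (bellmanRes P r f h) =
      Eexp P π x1 h (f h) - Eexp P π x1 h (r h) -
        ∑ x, occ P π x1 (h + 1) x * maxVal f (h + 1) x := by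
  rw [← sum_occ_mul_expected_next]
  simp only [Eexp, bellmanRes, maxVal, ← sum_sub_distrib]
  exact sum_congr rfl fun x _ => sum_congr rfl fun a _ => by ring

lemma sum_Eexp_bellmanRes (P : ℕ → X → A → X → ℝ) (r f π : ℕ → X → A → ℝ) (x1 : X) (H : ℕ) :
    ∑ h ∈ range H, Eexp P π x1 h (bellmanRes P r f h) =
      maxVal f 0 x1 - val P r π H 0 x1 - ∑ x, occ P π x1 H x * maxVal f H x +
        ∑ h ∈ range H, (Eexp P π x1 h (f h) - ∑ x, occ P π x1 h x * maxVal f h x) := by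
  have htelescope := sum_range_sub' (fun h => ∑ x, occ P π x1 h x * maxVal f h x) H
  simp only [sum_occ_zero_mul] at htelescope
  simp only [Eexp_bellmanRes, val_eq_sum_Eexp, sum_sub_distrib] at htelescope ⊢
  linarith

lemma Eexp_dpol_of_greedy (P : ℕ → X → A → X → ℝ) (f : ℕ → X → A → ℝ) [DecidableEq A]
    (g : ℕ → X → A) (hgreedy : ∀ h x a, f h x a ≤ f h x (g h x)) (x1 : X) (h : ℕ) :
    Eexp P (dpol g) x1 h (f h) = ∑ x, occ P (dpol g) x1 h x * maxVal f h x := by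
  refine sum_congr rfl fun x _ => ?_
  simp [dpol, maxVal_eq_of_greedy (hgreedy h x)]

lemma Eexp_le_sum_occ_mul_maxVal (P : ℕ → X → A → X → ℝ) (f π : ℕ → X → A → ℝ) (x1 : X)
    (hP : ∀ h x a x', 0 ≤ P h x a x') (hπ : ∀ h x a, 0 ≤ π h x a)
    (hπsum : ∀ h x, ∑ a, π h x a = 1) (h : ℕ) :
    Eexp P π x1 h (f h) ≤ ∑ x, occ P π x1 h x * maxVal f h x := by
  refine sum_le_sum fun x _ => ?_
  calc ∑ a, occ P π x1 h x * π h x a * f h x a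
      ≤ ∑ a, occ P π x1 h x * π h x a * maxVal f h x :=
        sum_le_sum fun a _ => mul_le_mul_of_nonneg_left (le_maxVal f h x a)
          (mul_nonneg (occ_nonneg P π x1 hP hπ h x) (hπ h x a))
    _ = occ P π x1 h x * maxVal f h x := by rw [← sum_mul, ← mul_sum, hπsum, mul_one]

end ValueDecomposition

theorem value_difference_decomposition_general
    [Fintype X] [DecidableEq X] [Fintype A] [Nonempty A] [DecidableEq A]
    (H : ℕ) (P : ℕ → X → A → X → ℝ) (r : ℕ → X → A → ℝ) (x1 : X)
    (hPpos : ∀ h x a x', 0 ≤ P h x a x')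
    (f : ℕ → X → A → ℝ) (hfH : ∀ x a, f H x a = 0)
    (g : ℕ → X → A) (hgreedy : ∀ h x a, f h x a ≤ f h x (g h x))
    (π' : ℕ → X → A → ℝ)
    (hπ'pos : ∀ h x a, 0 ≤ π' h x a) (hπ'sum : ∀ h x, ∑ a, π' h x a = 1) :
    val P r π' H 0 x1 - val P r (dpol g) H 0 x1 ≤
      (∑ h ∈ range H, Eexp P (dpol g) x1 h fun x a => bellmanRes P r f h x a) -
        ∑ h ∈ range H, Eexp P π' x1 h fun x a => bellmanRes P r f h x a := by
  have hmaxVal_H : ∀ x, maxVal f H x = 0 := fun x => by simp [maxVal, hfH]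
  have hgreedy_gap : ∑ h ∈ range H, (Eexp P (dpol g) x1 h (f h) -
      ∑ x, occ P (dpol g) x1 h x * maxVal f h x) = 0 :=
    sum_eq_zero fun h _ => sub_eq_zero.mpr (Eexp_dpol_of_greedy P f g hgreedy x1 h)
  have hπ'_gap : ∑ h ∈ range H, (Eexp P π' x1 h (f h) -
      ∑ x, occ P π' x1 h x * maxVal f h x) ≤ 0 :=
    sum_nonpos fun h _ => sub_nonpos.mpr
      (Eexp_le_sum_occ_mul_maxVal P f π' x1 hPpos hπ'pos hπ'sum h)
  have hgreedy_sum := sum_Eexp_bellmanRes P r f (dpol g) x1 H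
  have hπ'_sum := sum_Eexp_bellmanRes P r f π' x1 H
  simp only [hmaxVal_H, mul_zero, sum_const_zero] at hgreedy_sum hπ'_sum
  linarith

/-- Value difference decomposition (Lemma 3 of the paper): for any value function
`f = (f_0, …, f_{H-1})` (with `f_H = 0`), its greedy policy `π^f = g` and any policy `π'`,
`V_1^{π'}(x_1) - V_1^{π^f}(x_1) ≤ Σ_h E_{π^f}[(E_h f)(x_h,a_h)] - Σ_h E_{π'}[(E_h f)(x_h,a_h)]`. -/
theorem value_difference_decomposition
    [Fintype X] [DecidableEq X] [Fintype A] [Nonempty A] [DecidableEq A]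
    (H : ℕ) (P : ℕ → X → A → X → ℝ) (r : ℕ → X → A → ℝ) (x1 : X)
    (hPpos : ∀ h x a x', 0 ≤ P h x a x')
    (hPsum : ∀ h x a, ∑ x', P h x a x' = 1)
    (f : ℕ → X → A → ℝ) (hfH : ∀ x a, f H x a = 0)
    (g : ℕ → X → A) (hgreedy : ∀ h x a, f h x a ≤ f h x (g h x))
    (π' : ℕ → X → A → ℝ)
    (hπ'pos : ∀ h x a, 0 ≤ π' h x a) (hπ'sum : ∀ h x, ∑ a, π' h x a = 1) :
    val P r π' H 0 x1 - val P r (dpol g) H 0 x1 ≤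
      (∑ h ∈ range H, Eexp P (dpol g) x1 h fun x a => bellmanRes P r f h x a) -
        ∑ h ∈ range H, Eexp P π' x1 h fun x a => bellmanRes P r f h x a :=
  value_difference_decomposition_general H P r x1 hPpos f hfH g hgreedy π' hπ'pos hπ'sum
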